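/- For 0 < q < 1, integer r \ge 2, and \alpha = (\alpha_1,...,\alpha_{r-1}) with \alpha_i \ge -1 + i/r, the q-Bessel function j_\alpha(\lambda x, q^r, \delta) = \sum_{n=0}^\infty (-1)^n q^{r\delta\binom{n}{2}} (\lambda x)^{rn} / \alpha_{rn,\alpha,q}, with \alpha_{rn,\alpha,q} = ((r)_q)^{rn} [n]_{q^r}! \prod_{i=1}^{r-1} \Gamma_{q^r}(\alpha_i + n + 1)/\Gamma_{q^r}(\alpha_i+1), satisfies the equation B_{r,\delta} u(x) = -\lambda^r u(x) with u(0) = 1 and D_q^k u(0) = 0 for k = 1,...,r-1, where B_{r,\delta} u = \Lambda_{q^\delta}^{-1}\big( x^{-(r-1)} \prod_{i=1}^{r-1}\big( q^{r\alpha_i+1} x D_q + (r\alpha_i+1)_q \big) D_q u \big). -/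

import Mathlib

set_option maxHeartbeats 1600000

open Real Filter


/-- The q-Pochhammer symbol `(a; q)_n`. -/
noncomputable def qPoch (a q : ℝ) (n : ℕ) : ℝ :=
  ∏ j ∈ Finset.range n, (1 - a * q ^ j)

/-- The q-factorial `[n]_Q! = (Q;Q)_n / (1-Q)^n`. -/
noncomputable def qFact (Q : ℝ) (n : ℕ) : ℝ := qPoch Q Q n / (1 - Q) ^ n

/-- The infinite q-Pochhammer symbol. -/
noncomputable def qPochInf (a Q : ℝ) : ℝ := ∏' j : ℕ, (1 - a * Q ^ j)

/-- The q-Gamma function. -/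
noncomputable def qGamma (Q t : ℝ) : ℝ :=
  qPochInf Q Q * (1 - Q) ^ (1 - t) / qPochInf (Q ^ t) Q

/-- The q-number `(t)_q = (1 - q^t)/(1 - q)` (real power). -/
noncomputable def qNum (q t : ℝ) : ℝ := (1 - q ^ t) / (1 - q)

/-- The q-derivative. -/
noncomputable def Dq (q : ℝ) (f : ℝ → ℝ) : ℝ → ℝ :=
  fun x => (f (q * x) - f x) / ((q - 1) * x)

/-- The q-Bessel operator of r-order:
`B_{r,δ} u = Λ_{q^δ}^{-1}( x^{-(r-1)} ∏_{i=1}^{r-1}(q^{rα_i+1} x D_q + (rα_i+1)_q) D_q u )`. -/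
noncomputable def qBesselOp (q : ℝ) (r : ℕ) (δ : ℝ) (α : ℕ → ℝ) (u : ℝ → ℝ) : ℝ → ℝ :=
  fun x =>
    (fun y => (1 / y ^ (r - 1)) *
      (((List.range (r - 1)).map (fun i => fun (g : ℝ → ℝ) (z : ℝ) =>
          q ^ ((r : ℝ) * α (i + 1) + 1) * z * Dq q g z +
            qNum q ((r : ℝ) * α (i + 1) + 1) * g z)).foldr (· ∘ ·) id)
        (Dq q u) y)
    (q ^ (-δ) * x)

/-- The normalizing coefficients
`α_{rn,α,q} = ((r)_q)^{rn} [n]_{q^r}! ∏_{i=1}^{r-1} Γ_{q^r}(α_i+n+1)/Γ_{q^r}(α_i+1)`. -/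
noncomputable def besselCoeff (q : ℝ) (r : ℕ) (α : ℕ → ℝ) (n : ℕ) : ℝ :=
  (qNum q r) ^ (r * n) * qFact (q ^ r) n *
    ∏ i ∈ Finset.Icc 1 (r - 1), qGamma (q ^ r) (α i + n + 1) / qGamma (q ^ r) (α i + 1)

/-- The higher-order q-Bessel function
`j_α(x, q^r, δ) = ∑_n (-1)^n q^{rδ C(n,2)} x^{rn}/α_{rn,α,q}`. -/
noncomputable def qBesselJ (q : ℝ) (r : ℕ) (δ : ℝ) (α : ℕ → ℝ) (x : ℝ) : ℝ :=
  ∑' n : ℕ, (-1 : ℝ) ^ n * q ^ ((r : ℝ) * δ * (n.choose 2 : ℝ)) * x ^ (r * n) /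
    besselCoeff q r α n


section helperPoch
variable {a Q : ℝ}

private lemma factor_pos (hQ0 : 0 < Q) (hQ1 : Q < 1) (ha0 : 0 ≤ a) (ha1 : a < 1) :
    ∀ (j : ℕ), 0 < 1 - a * Q ^ j := by
  intro j
  have h1 : Q ^ j ≤ 1 := pow_le_one₀ hQ0.le hQ1.le
  nlinarith [pow_pos hQ0 j]

private lemma summable_log_factor (hQ0 : 0 < Q) (hQ1 : Q < 1) (ha0 : 0 ≤ a) (ha1 : a < 1) :
    Summable fun j : ℕ => Real.log (1 - a * Q ^ j) := by
  have hfp := factor_pos hQ0 hQ1 ha0 ha1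
  have h1a : 0 < 1 - a := by linarith
  apply Summable.of_abs
  have hgeom : Summable (fun j : ℕ => (a / (1 - a)) * Q ^ j) :=
    (summable_geometric_of_lt_one hQ0.le hQ1).mul_left _
  refine Summable.of_nonneg_of_le (fun j => abs_nonneg _) (fun j => ?_) hgeom
  have hQj : 0 < Q ^ j := pow_pos hQ0 j
  have hQj1 : Q ^ j ≤ 1 := pow_le_one₀ hQ0.le hQ1.le
  have hy0 : 0 ≤ a * Q ^ j := mul_nonneg ha0 hQj.le
  have hya : a * Q ^ j ≤ a := by nlinarith
  have hpos : 0 < 1 - a * Q ^ j := hfp j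
  have hlog_le : Real.log (1 - a * Q ^ j) ≤ 0 :=
    Real.log_nonpos (by linarith) (by linarith)
  rw [abs_of_nonpos hlog_le, ← Real.log_inv]
  have h2 := Real.log_le_sub_one_of_pos (x := (1 - a * Q ^ j)⁻¹) (by positivity)
  have h3 : (1 - a * Q ^ j)⁻¹ - 1 = (a * Q ^ j) / (1 - a * Q ^ j) := by
    field_simp
    ring
  rw [h3] at h2
  refine h2.trans ?_
  have h4 : (a * Q ^ j) / (1 - a * Q ^ j) ≤ (a * Q ^ j) / (1 - a) :=
    div_le_div_of_nonneg_left hy0 h1a (by linarith)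
  refine h4.trans (le_of_eq ?_)
  ring

private lemma qPochInf_pos (hQ0 : 0 < Q) (hQ1 : Q < 1) (ha0 : 0 ≤ a) (ha1 : a < 1) :
    0 < qPochInf a Q := by
  have hfp := factor_pos hQ0 hQ1 ha0 ha1
  have hlog := summable_log_factor hQ0 hQ1 ha0 ha1
  have key := Real.rexp_tsum_eq_tprod (f := fun j : ℕ => 1 - a * Q ^ j) hfp hlog
  rw [qPochInf, ← key]
  exact Real.exp_pos _

private lemma qPochInf_multipliable (hQ0 : 0 < Q) (hQ1 : Q < 1) (ha0 : 0 ≤ a) (ha1 : a < 1) :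
    Multipliable fun j : ℕ => 1 - a * Q ^ j := by
  have h := Real.multipliable_of_summable_log (f := fun j : ℕ => 1 - a * Q ^ j)
    (factor_pos hQ0 hQ1 ha0 ha1) (summable_log_factor hQ0 hQ1 ha0 ha1)
  simpa using h

private lemma qPochInf_shift (hQ0 : 0 < Q) (hQ1 : Q < 1) (ha0 : 0 ≤ a) (ha1 : a < 1) :
    qPochInf a Q = (1 - a) * qPochInf (a * Q) Q := by
  have haQ0 : 0 ≤ a * Q := mul_nonneg ha0 hQ0.le
  have haQ1 : a * Q < 1 := by nlinarith
  have hm : Multipliable fun j : ℕ => 1 - (a * Q) * Q ^ j :=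
    qPochInf_multipliable hQ0 hQ1 haQ0 haQ1
  have hm' : Multipliable fun j : ℕ => 1 - a * Q ^ (j + 1) := by
    refine hm.congr fun j => ?_
    ring
  rw [qPochInf, tprod_eq_zero_mul' hm']
  simp only [pow_zero, mul_one]
  rw [qPochInf]
  congr 1
  exact tprod_congr fun j => by ring

private lemma qGamma_pos (hQ0 : 0 < Q) (hQ1 : Q < 1) {t : ℝ} (ht : 0 < t) :
    0 < qGamma Q t := by
  have h1 : 0 < qPochInf Q Q := qPochInf_pos hQ0 hQ1 hQ0.le hQ1
  have h2 : 0 < qPochInf (Q ^ t) Q :=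
    qPochInf_pos hQ0 hQ1 (Real.rpow_nonneg hQ0.le t) (Real.rpow_lt_one hQ0.le hQ1 ht)
  have h3 : (0:ℝ) < (1 - Q) ^ (1 - t) := Real.rpow_pos_of_pos (by linarith) _
  exact div_pos (mul_pos h1 h3) h2

private lemma qGamma_succ (hQ0 : 0 < Q) (hQ1 : Q < 1) {t : ℝ} (ht : 0 < t) :
    qGamma Q (t + 1) = qNum Q t * qGamma Q t := by
  have hQt0 : (0:ℝ) ≤ Q ^ t := Real.rpow_nonneg hQ0.le t
  have hQt1 : Q ^ t < 1 := Real.rpow_lt_one hQ0.le hQ1 ht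
  have hshift := qPochInf_shift hQ0 hQ1 hQt0 hQt1
  have hQt1' : Q ^ (t + 1) = Q ^ t * Q := by
    rw [Real.rpow_add hQ0, Real.rpow_one]
  have hpos : 0 < qPochInf (Q ^ t * Q) Q :=
    qPochInf_pos hQ0 hQ1 (mul_nonneg hQt0 hQ0.le) (by nlinarith)
  have h1Q : (0:ℝ) < 1 - Q := by linarith
  have hrw : (1 - Q) ^ (1 - (t + 1)) = (1 - Q) ^ (1 - t) / (1 - Q) := by
    rw [show (1 - (t+1)) = (1 - t) + (-1) by ring, Real.rpow_add h1Q,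
      Real.rpow_neg_one]
    ring
  rw [qGamma, qGamma, qNum, hQt1', hrw, hshift]
  have h1 : (1:ℝ) - Q ^ t ≠ 0 := by nlinarith
  field_simp

private lemma qNum_pos (hQ0 : 0 < Q) (hQ1 : Q < 1) {t : ℝ} (ht : 0 < t) :
    0 < qNum Q t := by
  have := Real.rpow_lt_one hQ0.le hQ1 ht
  exact div_pos (by linarith) (by linarith)

private lemma qNum_mono (hQ0 : 0 < Q) (hQ1 : Q < 1) {s t : ℝ} (h : s ≤ t) :
    qNum Q s ≤ qNum Q t := by
  have h1 : Q ^ t ≤ Q ^ s := Real.rpow_le_rpow_of_exponent_ge hQ0 hQ1.le h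
  have h1Q : (0:ℝ) < 1 - Q := by linarith
  rw [qNum, qNum, div_le_div_iff₀ h1Q h1Q]
  nlinarith

private lemma qFact_succ (hQ0 : 0 < Q) (hQ1 : Q < 1) (n : ℕ) :
    qFact Q (n + 1) = qFact Q n * qNum Q ((n : ℝ) + 1) := by
  have h1Q : (1:ℝ) - Q ≠ 0 := by linarith
  rw [qFact, qFact, qPoch, qPoch, qNum, Finset.prod_range_succ, pow_succ,
    show ((n:ℝ) + 1) = ((n + 1 : ℕ) : ℝ) by push_cast; ring, Real.rpow_natCast,
    div_mul_div_comm]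
  ring

end helperPoch

section helperOps
variable {q : ℝ}

private lemma qNum_shift (hq0 : 0 < q) (hq1 : q < 1) (b t : ℝ) :
    q ^ b * qNum q t + qNum q b = qNum q (b + t) := by
  have h1 : (1:ℝ) - q ≠ 0 := by linarith
  rw [qNum, qNum, qNum, Real.rpow_add hq0 b t]
  field_simp
  ring

private lemma qNum_rmul (hq0 : 0 < q) (hq1 : q < 1) (r : ℕ) (hr : 1 ≤ r) (t : ℝ) :
    qNum q ((r : ℝ) * t) = qNum q (r : ℝ) * qNum (q ^ r) t := by
  have h1q : (1:ℝ) - q ≠ 0 := by linarith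
  have hQ1 : q ^ r < 1 := pow_lt_one₀ hq0.le hq1 (by omega)
  have h1Q : (1:ℝ) - q ^ r ≠ 0 := by linarith
  have hpow : q ^ ((r:ℝ) * t) = (q ^ r : ℝ) ^ t := by
    rw [← Real.rpow_natCast q r, ← Real.rpow_mul hq0.le]
  rw [qNum, qNum, qNum, hpow, Real.rpow_natCast]
  field_simp

private lemma Dq_tsum_eq (hq0 : 0 < q) (hq1 : q < 1) (a : ℕ → ℝ) (e : ℕ → ℕ)
    (hs : ∀ x : ℝ, x ≠ 0 → Summable fun n => a n * x ^ e n) {x : ℝ} (hx : x ≠ 0) :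
    Dq q (fun y => ∑' n, a n * y ^ e n) x = (∑' n, a n * qNum q (e n) * x ^ (e n - 1)) ∧
      Summable fun n => a n * qNum q (e n) * x ^ (e n - 1) := by
  have hq1' : q - 1 ≠ 0 := sub_ne_zero_of_ne hq1.ne
  have hqx : q * x ≠ 0 := mul_ne_zero hq0.ne' hx
  have hkey : ∀ n, (a n * (q * x) ^ e n - a n * x ^ e n) / ((q - 1) * x)
      = a n * qNum q (e n) * x ^ (e n - 1) := by
    intro n
    cases h : e n with
    | zero => simp [qNum]
    | succ m =>
      rw [qNum, Nat.cast_succ, show ((m:ℝ) + 1) = ((m + 1 : ℕ) : ℝ) by push_cast; ring,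
        Real.rpow_natCast, mul_pow, Nat.succ_sub_one]
      have h1 : (1:ℝ) - q ≠ 0 := by linarith
      field_simp
      ring
  have hsub : Summable fun n => (a n * (q * x) ^ e n - a n * x ^ e n) / ((q - 1) * x) :=
    ((hs _ hqx).sub (hs x hx)).div_const _
  constructor
  · rw [Dq]
    rw [← Summable.tsum_sub (hs _ hqx) (hs x hx), ← tsum_div_const]
    exact tsum_congr hkey
  · exact hsub.congr hkey

private lemma op_tsum_eq (hq0 : 0 < q) (hq1 : q < 1) (b : ℝ) (a : ℕ → ℝ) (m : ℕ → ℕ)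
    (hs : ∀ x : ℝ, x ≠ 0 → Summable fun n => a n * x ^ m n)
    (g : ℝ → ℝ) (hg : ∀ x : ℝ, x ≠ 0 → g x = ∑' n, a n * x ^ m n)
    {x : ℝ} (hx : x ≠ 0) :
    q ^ b * x * Dq q g x + qNum q b * g x = (∑' n, a n * qNum q (b + m n) * x ^ m n) ∧
      Summable fun n => a n * qNum q (b + m n) * x ^ m n := by
  have hqx : q * x ≠ 0 := mul_ne_zero hq0.ne' hx
  have hD := Dq_tsum_eq hq0 hq1 a m hs hx
  have hDg : Dq q g x = ∑' n, a n * qNum q (m n) * x ^ (m n - 1) := by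
    rw [← hD.1, Dq, Dq]
    rw [hg _ hqx, hg x hx]
  have h1 : Summable fun n => q ^ b * x * (a n * qNum q (m n) * x ^ (m n - 1)) :=
    (hD.2.mul_left (q ^ b * x)).congr fun n => by ring
  have h2 : Summable fun n => qNum q b * (a n * x ^ m n) := (hs x hx).mul_left _
  have hterm : ∀ n, q ^ b * x * (a n * qNum q (m n) * x ^ (m n - 1))
      + qNum q b * (a n * x ^ m n) = a n * qNum q (b + m n) * x ^ m n := by
    intro n
    cases h : m n with
    | zero =>
      simp [qNum]
      ring
    | succ k =>
      rw [Nat.succ_sub_one]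
      have key := qNum_shift hq0 hq1 b ((k:ℝ)+1)
      push_cast
      rw [← key]
      ring
  constructor
  · rw [hDg, hg x hx, ← tsum_mul_left, ← tsum_mul_left, ← Summable.tsum_add h1 h2]
    exact tsum_congr hterm
  · exact (h1.add h2).congr hterm

private lemma fold_tsum_eq (hq0 : 0 < q) (hq1 : q < 1) :
    ∀ (l : List ℝ) (a : ℕ → ℝ) (m : ℕ → ℕ) (g : ℝ → ℝ),
      (∀ x : ℝ, x ≠ 0 → Summable fun n => a n * x ^ m n) →
      (∀ x : ℝ, x ≠ 0 → g x = ∑' n, a n * x ^ m n) →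
      ∀ x : ℝ, x ≠ 0 →
      ((l.map (fun b => fun (g : ℝ → ℝ) (z : ℝ) =>
          q ^ b * z * Dq q g z + qNum q b * g z)).foldr (· ∘ ·) id) g x
        = (∑' n, a n * ((l.map fun b => qNum q (b + m n)).prod) * x ^ m n) ∧
      Summable fun n => a n * ((l.map fun b => qNum q (b + m n)).prod) * x ^ m n := by
  intro l
  induction l with
  | nil =>
    intro a m g hs hg x hx
    simp only [List.map_nil, List.foldr_nil, id_eq, List.prod_nil, mul_one]
    exact ⟨hg x hx, hs x hx⟩
  | cons b bs ih =>
    intro a m g hs hg x hx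
    set P : ℕ → ℝ := fun n => ((bs.map fun b' => qNum q (b' + m n)).prod) with hP
    have hs' : ∀ z : ℝ, z ≠ 0 → Summable fun n => a n * P n * z ^ m n :=
      fun z hz => (ih a m g hs hg z hz).2
    have hg' : ∀ z : ℝ, z ≠ 0 →
        ((bs.map (fun b => fun (g : ℝ → ℝ) (z : ℝ) =>
          q ^ b * z * Dq q g z + qNum q b * g z)).foldr (· ∘ ·) id) g z
          = ∑' n, a n * P n * z ^ m n :=
      fun z hz => (ih a m g hs hg z hz).1
    have hop := op_tsum_eq hq0 hq1 b (fun n => a n * P n) m hs' _ hg' hx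
    simp only [List.map_cons, List.foldr_cons, Function.comp_apply, List.prod_cons]
    constructor
    · rw [hop.1]
      exact tsum_congr fun n => by ring
    · exact hop.2.congr fun n => by ring

private lemma list_range_map_prod (k : ℕ) (f : ℕ → ℝ) :
    ((List.range k).map f).prod = ∏ i ∈ Finset.range k, f i := by
  induction k with
  | zero => simp
  | succ n ih => rw [List.prod_range_succ, Finset.prod_range_succ, ih]

private lemma Icc_prod_eq (r : ℕ) (F : ℕ → ℝ) :
    ∏ i ∈ Finset.Icc 1 (r - 1), F i = ∏ i ∈ Finset.range (r - 1), F (i + 1) := by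
  rw [← Finset.Ico_add_one_right_eq_Icc, Finset.prod_Ico_eq_prod_range]
  simp only [Nat.add_sub_cancel]
  exact Finset.prod_congr rfl fun i _ => by rw [add_comm]

end helperOps

/-- `j_α(λ·, q^r, δ)` satisfies `B_{r,δ} u = -λ^r u` with `u(0) = 1` and
`D_q^k u(0) = 0` for `k = 1, ..., r-1`. -/
theorem qBesselJ_solves (q : ℝ) (hq0 : 0 < q) (hq1 : q < 1)
    (r : ℕ) (hr : 2 ≤ r) (δ : ℝ) (hδ : 0 < δ) (α : ℕ → ℝ)
    (hα : ∀ i : ℕ, 1 ≤ i → i ≤ r - 1 → -1 + (i : ℝ) / r ≤ α i) (lam : ℝ) :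
    (∀ x : ℝ, x ≠ 0 →
      qBesselOp q r δ α (fun y => qBesselJ q r δ α (lam * y)) x =
        -lam ^ r * qBesselJ q r δ α (lam * x)) ∧
    qBesselJ q r δ α (lam * 0) = 1 ∧
    (∀ k : ℕ, 1 ≤ k → k ≤ r - 1 →
      (Dq q)^[k] (fun y => qBesselJ q r δ α (lam * y)) 0 = 0) := by
  have hr1 : 1 ≤ r := by omega
  have h1q : (0:ℝ) < 1 - q := by linarith
  have hQ0 : 0 < q ^ r := pow_pos hq0 r
  have hQ1 : q ^ r < 1 := pow_lt_one₀ hq0.le hq1 (by omega)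
  have hrR : (0:ℝ) < (r:ℝ) := by exact_mod_cast (by omega : 0 < r)
  have hαpos : ∀ i ∈ Finset.Icc 1 (r - 1), (0:ℝ) < α i + 1 := by
    intro i hi
    rw [Finset.mem_Icc] at hi
    have h1 := hα i hi.1 hi.2
    have hi1 : (1:ℝ) ≤ (i:ℝ) := by exact_mod_cast hi.1
    have h2 : (0:ℝ) < (i:ℝ) / r := div_pos (by linarith) hrR
    linarith
  have hαn : ∀ (n : ℕ), ∀ i ∈ Finset.Icc 1 (r - 1), (0:ℝ) < α i + n + 1 := by
    intro n i hi
    have h1 := hαpos i hi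
    have h2 : (0:ℝ) ≤ n := Nat.cast_nonneg n
    linarith
  have hqNumr : 0 < qNum q (r:ℝ) := qNum_pos hq0 hq1 hrR
  set A : ℕ → ℝ := besselCoeff q r α with hAdef
  have hApos : ∀ n, 0 < A n := by
    intro n
    rw [hAdef, besselCoeff]
    have hfact : 0 < qFact (q ^ r) n := by
      rw [qFact, qPoch]
      refine div_pos (Finset.prod_pos fun j _ => ?_) (pow_pos (by linarith) n)
      have h1 : q ^ r * (q ^ r) ^ j ≤ q ^ r * 1 :=
        mul_le_mul_of_nonneg_left (pow_le_one₀ hQ0.le hQ1.le) hQ0.le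
      nlinarith
    apply mul_pos (mul_pos (pow_pos hqNumr _) hfact)
    apply Finset.prod_pos
    intro i hi
    exact div_pos (qGamma_pos hQ0 hQ1 (hαn n i hi)) (qGamma_pos hQ0 hQ1 (by
      have := hαpos i hi; linarith))
  set ρ : ℕ → ℝ := fun n => qNum q (r:ℝ) ^ r * qNum (q ^ r) ((n:ℝ) + 1) *
    ∏ i ∈ Finset.Icc 1 (r - 1), qNum (q ^ r) (α i + n + 1) with hρdef
  have hρpos : ∀ n, 0 < ρ n := by
    intro n
    apply mul_pos (mul_pos (pow_pos hqNumr _) (qNum_pos hQ0 hQ1 (by positivity)))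
    exact Finset.prod_pos fun i hi => qNum_pos hQ0 hQ1 (hαn n i hi)
  have hA_succ : ∀ n, A (n + 1) = A n * ρ n := by
    intro n
    rw [hAdef, besselCoeff, besselCoeff]
    have hprod : (∏ i ∈ Finset.Icc 1 (r - 1),
        qGamma (q ^ r) (α i + ((n + 1 : ℕ) : ℝ) + 1) / qGamma (q ^ r) (α i + 1))
        = (∏ i ∈ Finset.Icc 1 (r - 1), qNum (q ^ r) (α i + n + 1)) *
          ∏ i ∈ Finset.Icc 1 (r - 1), qGamma (q ^ r) (α i + n + 1) / qGamma (q ^ r) (α i + 1) := by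
      rw [← Finset.prod_mul_distrib]
      refine Finset.prod_congr rfl fun i hi => ?_
      have ht := hαn n i hi
      have harg : α i + ((n + 1 : ℕ) : ℝ) + 1 = (α i + n + 1) + 1 := by push_cast; ring
      rw [harg, qGamma_succ hQ0 hQ1 ht, mul_div_assoc]
    rw [hprod, qFact_succ hQ0 hQ1 n, show r * (n + 1) = r * n + r by ring, pow_add]
    ring
  set c : ℕ → ℝ := fun n =>
    (-1 : ℝ) ^ n * q ^ ((r : ℝ) * δ * (n.choose 2 : ℝ)) * lam ^ (r * n) / A n with hcdef
  have hc_succ : ∀ n, c (n + 1) = c n * (-(lam ^ r) * (q ^ ((r:ℝ) * δ)) ^ n / ρ n) := by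
    intro n
    have hAn := (hApos n).ne'
    have hAn1 := (hApos (n+1)).ne'
    have hρn := (hρpos n).ne'
    have hchoose : (((n+1).choose 2 : ℕ) : ℝ) = (n.choose 2 : ℝ) + n := by
      rw [show (n+1).choose 2 = n.choose 1 + n.choose 2 from Nat.choose_succ_succ n 1,
        Nat.choose_one_right]
      push_cast
      ring
    have hqn : q ^ ((r:ℝ) * δ * (n:ℝ)) = (q ^ ((r:ℝ) * δ)) ^ n := by
      rw [Real.rpow_mul hq0.le, Real.rpow_natCast]
    simp only [hcdef]
    rw [hA_succ n,
      show ((r:ℝ) * δ * (((n+1).choose 2 : ℕ):ℝ)) = (r:ℝ) * δ * (n.choose 2:ℝ) + (r:ℝ) * δ * (n:ℝ)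
        by rw [hchoose]; ring,
      Real.rpow_add hq0, hqn, show r * (n+1) = r * n + r by ring, pow_add, pow_succ]
    field_simp
    ring
  have hρge : ∀ n, ρ 0 ≤ ρ n := by
    intro n
    simp only [hρdef]
    have hn0 : (0:ℝ) ≤ (n:ℝ) := Nat.cast_nonneg n
    have h1 : qNum (q ^ r) (((0:ℕ):ℝ) + 1) ≤ qNum (q ^ r) ((n:ℝ) + 1) :=
      qNum_mono hQ0 hQ1 (by push_cast; linarith)
    have h2 : ∀ i ∈ Finset.Icc 1 (r-1),
        qNum (q ^ r) (α i + ((0:ℕ):ℝ) + 1) ≤ qNum (q ^ r) (α i + (n:ℝ) + 1) :=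
      fun i hi => qNum_mono hQ0 hQ1 (by push_cast; linarith)
    have hnn : ∀ i ∈ Finset.Icc 1 (r-1), 0 ≤ qNum (q ^ r) (α i + ((0:ℕ):ℝ) + 1) :=
      fun i hi => (qNum_pos hQ0 hQ1 (hαn 0 i hi)).le
    have h3 := Finset.prod_le_prod hnn h2
    have hpos1 : 0 < qNum (q ^ r) (((0:ℕ):ℝ) + 1) :=
      qNum_pos hQ0 hQ1 (by push_cast; norm_num)
    have hposn : 0 < qNum (q ^ r) ((n:ℝ) + 1) := qNum_pos hQ0 hQ1 (by linarith)
    have h6 : qNum q (r:ℝ) ^ r * qNum (q ^ r) (((0:ℕ):ℝ) + 1)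
        ≤ qNum q (r:ℝ) ^ r * qNum (q ^ r) ((n:ℝ) + 1) :=
      mul_le_mul_of_nonneg_left h1 (pow_pos hqNumr r).le
    exact mul_le_mul h6 h3 (Finset.prod_nonneg hnn)
      (mul_pos (pow_pos hqNumr r) hposn).le
  have hsum : ∀ x : ℝ, Summable fun n => c n * x ^ (r * n) := by
    intro x
    have hterm : ∀ n, c (n+1) * x ^ (r*(n+1))
        = (c n * x ^ (r*n)) * (-(lam^r) * (q ^ ((r:ℝ)*δ))^n / ρ n * x ^ r) := by
      intro n
      rw [hc_succ n, show r*(n+1) = r*n + r by ring, pow_add]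
      ring
    have hq' : (0:ℝ) ≤ q ^ ((r:ℝ)*δ) := (Real.rpow_pos_of_pos hq0 _).le
    have hqlt : q ^ ((r:ℝ)*δ) < 1 := Real.rpow_lt_one hq0.le hq1 (by positivity)
    have hB : 0 < ρ 0 := hρpos 0
    have htendsto : Tendsto (fun n : ℕ => |lam ^ r * x ^ r| / ρ 0 * (q ^ ((r:ℝ)*δ))^n)
        atTop (nhds 0) := by
      have := (tendsto_pow_atTop_nhds_zero_of_lt_one hq' hqlt).const_mul
        (|lam ^ r * x ^ r| / ρ 0)
      simpa using this
    have h2 : ∀ n, |(-(lam^r) * (q ^ ((r:ℝ)*δ))^n / ρ n * x ^ r)|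
        ≤ |lam ^ r * x ^ r| / ρ 0 * (q ^ ((r:ℝ)*δ))^n := by
      intro n
      have hρn := hρpos n
      have hge := hρge n
      have hnum : (0:ℝ) ≤ |lam ^ r| * ((q ^ ((r:ℝ)*δ))^n * |x ^ r|) := by positivity
      calc |(-(lam^r) * (q ^ ((r:ℝ)*δ))^n / ρ n * x ^ r)|
          = |lam ^ r| * ((q ^ ((r:ℝ)*δ))^n * |x ^ r|) / ρ n := by
            rw [abs_mul, abs_div, abs_mul, abs_neg, abs_of_pos hρn,
              abs_of_nonneg (pow_nonneg hq' n)]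
            ring
        _ ≤ |lam ^ r| * ((q ^ ((r:ℝ)*δ))^n * |x ^ r|) / ρ 0 :=
            div_le_div_of_nonneg_left hnum hB hge
        _ = |lam ^ r * x ^ r| / ρ 0 * (q ^ ((r:ℝ)*δ))^n := by rw [abs_mul]; ring
    have hev : ∀ᶠ n in atTop, |(-(lam^r) * (q ^ ((r:ℝ)*δ))^n / ρ n * x ^ r)| ≤ 1/2 := by
      filter_upwards [htendsto.eventually_lt_const (by norm_num : (0:ℝ) < 1/2)] with n hn
      exact (h2 n).trans hn.le
    apply summable_of_ratio_norm_eventually_le (r := 1/2) (by norm_num)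
    filter_upwards [hev] with n hn
    rw [hterm n, norm_mul]
    calc ‖c n * x ^ (r*n)‖ * ‖-(lam^r) * (q ^ ((r:ℝ)*δ))^n / ρ n * x ^ r‖
        ≤ ‖c n * x ^ (r*n)‖ * (1/2) := by
          apply mul_le_mul_of_nonneg_left _ (norm_nonneg _)
          rw [Real.norm_eq_abs]
          exact hn
      _ = 1/2 * ‖c n * x ^ (r*n)‖ := mul_comm _ _
  have hu : ∀ y : ℝ, qBesselJ q r δ α (lam * y) = ∑' n, c n * y ^ (r * n) := by
    intro y
    rw [qBesselJ]
    refine tsum_congr fun n => ?_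
    simp only [hcdef, hAdef]
    rw [mul_pow]
    ring
  refine ⟨?_, ?_, ?_⟩
  · intro x hx
    have hz0 : (0:ℝ) < q ^ (-δ) := Real.rpow_pos_of_pos hq0 _
    have hz : q ^ (-δ) * x ≠ 0 := mul_ne_zero hz0.ne' hx
    have huf : (fun y => qBesselJ q r δ α (lam * y))
        = fun y => ∑' n, c n * y ^ (r * n) := funext hu
    set l : List ℝ := (List.range (r - 1)).map (fun i => (r:ℝ) * α (i + 1) + 1) with hldef
    have hPkey : ∀ n : ℕ, qNum q ((r * (n+1) : ℕ) : ℝ) *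
        ((l.map fun b => qNum q (b + ((r * (n+1) - 1 : ℕ) : ℝ))).prod) = ρ n := by
      intro n
      have h1n : 1 ≤ r * (n + 1) := by
        have := Nat.mul_le_mul hr1 (Nat.succ_le_succ (Nat.zero_le n))
        simpa using this
      have hcast : ((r * (n+1) - 1 : ℕ) : ℝ) = (r:ℝ) * ((n:ℝ) + 1) - 1 := by
        rw [Nat.cast_sub h1n]
        push_cast
        ring
      have hfirst : qNum q ((r * (n+1) : ℕ) : ℝ)
          = qNum q (r:ℝ) * qNum (q ^ r) ((n:ℝ) + 1) := by
        rw [show ((r * (n+1) : ℕ) : ℝ) = (r:ℝ) * ((n:ℝ) + 1) from by push_cast; ring]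
        exact qNum_rmul hq0 hq1 r hr1 _
      have hprodeq : (l.map fun b => qNum q (b + ((r * (n+1) - 1 : ℕ) : ℝ))).prod
          = qNum q (r:ℝ) ^ (r - 1) *
            ∏ i ∈ Finset.Icc 1 (r - 1), qNum (q ^ r) (α i + (n:ℝ) + 1) := by
        rw [hldef, List.map_map, list_range_map_prod]
        have hcongr : ∀ i ∈ Finset.range (r - 1),
            ((fun b => qNum q (b + ((r * (n+1) - 1 : ℕ) : ℝ)))
              ∘ (fun i => (r:ℝ) * α (i + 1) + 1)) i
            = qNum q (r:ℝ) * qNum (q ^ r) (α (i+1) + (n:ℝ) + 1) := by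
          intro i _
          show qNum q ((r:ℝ) * α (i+1) + 1 + ((r * (n+1) - 1 : ℕ) : ℝ)) = _
          rw [show (r:ℝ) * α (i+1) + 1 + ((r * (n+1) - 1 : ℕ) : ℝ)
              = (r:ℝ) * (α (i+1) + (n:ℝ) + 1) from by rw [hcast]; ring]
          exact qNum_rmul hq0 hq1 r hr1 _
        rw [Finset.prod_congr rfl hcongr, Finset.prod_mul_distrib, Finset.prod_const,
          Finset.card_range, ← Icc_prod_eq r (fun i => qNum (q ^ r) (α i + (n:ℝ) + 1))]
      have hpow : qNum q (r:ℝ) * qNum q (r:ℝ) ^ (r - 1) = qNum q (r:ℝ) ^ r := by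
        rw [← pow_succ']
        congr 1
        omega
      rw [hfirst, hprodeq, hρdef]
      calc qNum q (r:ℝ) * qNum (q ^ r) ((n:ℝ) + 1) *
            (qNum q (r:ℝ) ^ (r - 1) *
              ∏ i ∈ Finset.Icc 1 (r - 1), qNum (q ^ r) (α i + (n:ℝ) + 1))
          = qNum q (r:ℝ) * qNum q (r:ℝ) ^ (r - 1) * qNum (q ^ r) ((n:ℝ) + 1) *
              ∏ i ∈ Finset.Icc 1 (r - 1), qNum (q ^ r) (α i + (n:ℝ) + 1) := by ring
        _ = qNum q (r:ℝ) ^ r * qNum (q ^ r) ((n:ℝ) + 1) *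
              ∏ i ∈ Finset.Icc 1 (r - 1), qNum (q ^ r) (α i + (n:ℝ) + 1) := by rw [hpow]
    have hs0 : ∀ x' : ℝ, x' ≠ 0 → Summable fun n => c n * x' ^ (r * n) :=
      fun x' _ => hsum x'
    have hs1 : ∀ x' : ℝ, x' ≠ 0 → Summable fun n =>
        (fun k => c k * qNum q ((r * k : ℕ) : ℝ)) n * x' ^ ((fun k => r * k - 1) n) :=
      fun x' hx' => (Dq_tsum_eq hq0 hq1 c (fun k => r * k) hs0 hx').2
    have hg1 : ∀ x' : ℝ, x' ≠ 0 → Dq q (fun y => ∑' n, c n * y ^ (r * n)) x'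
        = ∑' n, (fun k => c k * qNum q ((r * k : ℕ) : ℝ)) n * x' ^ ((fun k => r * k - 1) n) :=
      fun x' hx' => (Dq_tsum_eq hq0 hq1 c (fun k => r * k) hs0 hx').1
    have hfold := fold_tsum_eq hq0 hq1 l (fun k => c k * qNum q ((r * k : ℕ) : ℝ))
      (fun k => r * k - 1) (Dq q (fun y => ∑' n, c n * y ^ (r * n))) hs1 hg1 _ hz
    have hmapeq : ((List.range (r - 1)).map (fun i => fun (g : ℝ → ℝ) (z : ℝ) =>
          q ^ ((r : ℝ) * α (i + 1) + 1) * z * Dq q g z +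
            qNum q ((r : ℝ) * α (i + 1) + 1) * g z))
        = (l.map (fun b => fun (g : ℝ → ℝ) (z : ℝ) =>
            q ^ b * z * Dq q g z + qNum q b * g z)) := by
      rw [hldef, List.map_map]
      rfl
    have hterm1 : ∀ n : ℕ, 1 / (q ^ (-δ) * x) ^ (r - 1) *
        (c (n+1) * qNum q ((r * (n+1) : ℕ) : ℝ) *
          ((l.map fun b => qNum q (b + ((r * (n+1) - 1 : ℕ) : ℝ))).prod) *
          (q ^ (-δ) * x) ^ (r * (n+1) - 1))
        = -lam ^ r * (c n * x ^ (r * n)) := by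
      intro n
      have hρn := hρpos n
      have hcρ : c (n+1) * ρ n = c n * (-(lam ^ r)) * (q ^ ((r:ℝ) * δ)) ^ n := by
        rw [hc_succ n]
        field_simp
      have hexp : r * (n+1) - 1 = r * n + (r - 1) := by
        have h1 : r * (n+1) = r * n + r := by ring
        omega
      have hzpow : (q ^ (-δ) * x) ^ (r * (n+1) - 1)
          = (q ^ (-δ) * x) ^ (r * n) * (q ^ (-δ) * x) ^ (r - 1) := by
        rw [hexp, pow_add]
      have hzr : (q ^ (-δ) * x) ^ (r - 1) ≠ 0 := pow_ne_zero _ hz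
      have hcancel : (q ^ ((r:ℝ) * δ)) ^ n * (q ^ (-δ)) ^ (r * n) = 1 := by
        rw [← Real.rpow_natCast (q ^ ((r:ℝ) * δ)) n, ← Real.rpow_natCast (q ^ (-δ)) (r * n),
          ← Real.rpow_mul hq0.le, ← Real.rpow_mul hq0.le, ← Real.rpow_add hq0,
          show (r:ℝ) * δ * (n:ℝ) + (-δ) * ((r * n : ℕ) : ℝ) = 0 from by push_cast; ring]
        exact Real.rpow_zero q
      have hxz : (q ^ (-δ) * x) ^ (r * n) = (q ^ (-δ)) ^ (r * n) * x ^ (r * n) :=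
        mul_pow _ _ _
      calc 1 / (q ^ (-δ) * x) ^ (r - 1) *
            (c (n+1) * qNum q ((r * (n+1) : ℕ) : ℝ) *
              ((l.map fun b => qNum q (b + ((r * (n+1) - 1 : ℕ) : ℝ))).prod) *
              (q ^ (-δ) * x) ^ (r * (n+1) - 1))
          = c (n+1) * (qNum q ((r * (n+1) : ℕ) : ℝ) *
              ((l.map fun b => qNum q (b + ((r * (n+1) - 1 : ℕ) : ℝ))).prod)) *
              (q ^ (-δ) * x) ^ (r * n) *
              ((q ^ (-δ) * x) ^ (r - 1) / (q ^ (-δ) * x) ^ (r - 1)) := by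
            rw [hzpow]
            ring
        _ = c (n+1) * ρ n * (q ^ (-δ) * x) ^ (r * n) := by
            rw [hPkey n, div_self hzr, mul_one]
        _ = c n * (-(lam ^ r)) * (q ^ ((r:ℝ) * δ)) ^ n *
              ((q ^ (-δ)) ^ (r * n) * x ^ (r * n)) := by rw [hcρ, hxz]
        _ = -lam ^ r * (c n * x ^ (r * n)) *
              ((q ^ ((r:ℝ) * δ)) ^ n * (q ^ (-δ)) ^ (r * n)) := by ring
        _ = -lam ^ r * (c n * x ^ (r * n)) := by rw [hcancel, mul_one]
    simp only [qBesselOp]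
    rw [huf, hu x, hmapeq, hfold.1]
    beta_reduce
    rw [Summable.tsum_eq_zero_add hfold.2]
    have hc00 : c 0 * qNum q ((r * 0 : ℕ) : ℝ) *
        ((l.map fun b => qNum q (b + ((r * 0 - 1 : ℕ) : ℝ))).prod) *
        (q ^ (-δ) * x) ^ (r * 0 - 1) = 0 := by
      have hq00 : qNum q ((r * 0 : ℕ) : ℝ) = 0 := by
        norm_num [qNum]
      rw [hq00]
      ring
    rw [hc00, zero_add, ← tsum_mul_left, ← tsum_mul_left]
    exact tsum_congr fun n => hterm1 n
  · -- value at 0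
    rw [hu 0]
    have hA0 : A 0 = 1 := by
      rw [hAdef, besselCoeff]
      have h1 : ∀ i ∈ Finset.Icc 1 (r-1),
          qGamma (q ^ r) (α i + ((0:ℕ):ℝ) + 1) / qGamma (q ^ r) (α i + 1) = 1 := by
        intro i hi
        rw [show α i + ((0:ℕ):ℝ) + 1 = α i + 1 by push_cast; ring]
        exact div_self (qGamma_pos hQ0 hQ1 (hαpos i hi)).ne'
      rw [Finset.prod_congr rfl h1, qFact, qPoch]
      simp
    have hzero : ∀ n : ℕ, n ≠ 0 → c n * (0:ℝ) ^ (r * n) = 0 := by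
      intro n hn
      obtain ⟨m, rfl⟩ : ∃ m, n = m + 1 := ⟨n - 1, by omega⟩
      have hz : (0:ℝ) ^ (r * (m+1)) = 0 := by
        exact zero_pow (Nat.mul_ne_zero (by omega) m.succ_ne_zero)
      rw [hz, mul_zero]
    rw [tsum_eq_single 0 hzero]
    simp only [hcdef, mul_zero, Nat.mul_zero, pow_zero, hA0]
    norm_num
  · -- iterated q-derivative at 0
    intro k hk1 hk2
    obtain ⟨j, rfl⟩ : ∃ j, k = j + 1 := ⟨k - 1, by omega⟩
    rw [Function.iterate_succ_apply']
    simp [Dq]
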